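/- Let (H,R) be quasitriangular and let ⟨·,·⟩: R_l ⊗ R_r → k be the pairing defined via the inverse ψ of the isomorphism (R_l)^{*cop} ≅ R_r. Then for all a, a' ∈ R_l and b, b' ∈ R_r: ⟨aa', b⟩ = ⟨a, b₂⟩⟨a', b₁⟩, ⟨a, bb'⟩ = ⟨a₁, b⟩⟨a₂, b'⟩, and ⟨a, S(b)⟩ = ⟨S⁻¹(a), b⟩. -/

import Mathlib

open scoped TensorProduct

structure QuasiTriangular (k H : Type*) [CommRing k] [Ring H] [HopfAlgebra k H] where
  R : H ⊗[k] H
  Sinv : H →ₗ[k] H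
  Sinv_antipode : ∀ h : H, Sinv (HopfAlgebra.antipode (R := k) h) = h
  antipode_Sinv : ∀ h : H, HopfAlgebra.antipode (R := k) (Sinv h) = h
  comul_fst : (TensorProduct.assoc k H H H)
      ((TensorProduct.map (Coalgebra.comul (R := k)) LinearMap.id) R)
    = (Algebra.TensorProduct.map (AlgHom.id k H) Algebra.TensorProduct.includeRight) R *
      Algebra.TensorProduct.includeRight R
  comul_snd : (TensorProduct.map LinearMap.id (Coalgebra.comul (R := k))) R
    = (Algebra.TensorProduct.map (AlgHom.id k H) Algebra.TensorProduct.includeRight) R *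
      (Algebra.TensorProduct.map (AlgHom.id k H) Algebra.TensorProduct.includeLeft) R
  counit_fst : (TensorProduct.lid k H)
      ((TensorProduct.map (Coalgebra.counit (R := k)) LinearMap.id) R) = 1
  counit_snd : (TensorProduct.rid k H)
      ((TensorProduct.map LinearMap.id (Coalgebra.counit (R := k))) R) = 1
  intertwine : ∀ h : H, (TensorProduct.comm k H H) (Coalgebra.comul (R := k) h) * R
    = R * Coalgebra.comul (R := k) h

variable (k H : Type*) [CommRing k] [Ring H] [HopfAlgebra k H]

/-- `θ f = f(R¹) R²`. -/
noncomputable def qtTheta (Q : QuasiTriangular k H) (f : Module.Dual k H) : H :=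
  (TensorProduct.lid k H) ((TensorProduct.map f LinearMap.id) Q.R)

/-- `θ' f = R¹ f(R²)`. -/
noncomputable def qtThetaL (Q : QuasiTriangular k H) (f : Module.Dual k H) : H :=
  (TensorProduct.rid k H) ((TensorProduct.map LinearMap.id f) Q.R)

/-- `R_l = {R¹ f(R²) : f ∈ H*}`. -/
noncomputable def Rl (Q : QuasiTriangular k H) : Submodule k H :=
  Submodule.span k {x | ∃ f : Module.Dual k H, x = qtThetaL k H Q f}

/-- `R_r = {f(R¹) R² : f ∈ H*}`. -/
noncomputable def Rr (Q : QuasiTriangular k H) : Submodule k H :=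
  Submodule.span k {x | ∃ f : Module.Dual k H, x = qtTheta k H Q f}

/-- Convolution product of two elements of `H*`. -/
noncomputable def qtConv (f g : Module.Dual k H) : Module.Dual k H :=
  (TensorProduct.lid k k).toLinearMap ∘ₗ (TensorProduct.map f g) ∘ₗ Coalgebra.comul (R := k)

/-- A subspace of a Hopf algebra which is a Hopf subalgebra. -/
def IsHopfSubalgebra (S : Submodule k H) : Prop :=
  (1 : H) ∈ S ∧ (∀ x ∈ S, ∀ y ∈ S, x * y ∈ S) ∧
  (∀ x ∈ S, Coalgebra.comul (R := k) x ∈ LinearMap.range (TensorProduct.map S.subtype S.subtype)) ∧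
  (∀ x ∈ S, HopfAlgebra.antipode (R := k) x ∈ S)

/-!
Every element of `R_r` is `θ f = f(R¹)R²`, and every `a ∈ R_l` is recovered from its pairing as
`a = θ' ⟨a, ·⟩ = R¹⟨a, R²⟩`: both sides give `f a` against every `θ f`, and functionals separate
points of a vector space. The axioms `(Δ ⊗ id)R = R₁₃R₂₃` and `(id ⊗ Δ)R = R₁₃R₁₂` make `θ` and `θ'`
multiplicative resp. antimultiplicative for the convolution product of `H*`, which gives the first
two identities; the second also needs `Δ(R_l) ⊆ R_l ⊗ R_l`, which follows from writing
`R = ∑ R¹ᵢ ⊗ eᵢ` over a basis `(eᵢ)` of `H`, since then each `R¹ᵢ` lies in `R_l`. The antipode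
identity follows from `(S ⊗ S)R = R`, itself a consequence of `(S ⊗ id)R = R⁻¹` and
`(id ⊗ S)R⁻¹ = R`.
-/

open TensorProduct HopfAlgebra Coalgebra

theorem TensorProduct.mem_range_rTensor_subtype_of_forall_lTensor_mem
    {R M N : Type*} [CommSemiring R] [AddCommMonoid M] [Module R M] [AddCommMonoid N]
    [Module R N] [Module.Free R N] (P : Submodule R M) (x : M ⊗[R] N)
    (hx : ∀ φ : Module.Dual R N, TensorProduct.rid R M (φ.lTensor M x) ∈ P) :
    x ∈ LinearMap.range (P.subtype.rTensor N) := by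
  classical
  let 𝒞 := Module.Free.chooseBasis R N
  let c := equivFinsuppOfBasisRight 𝒞 x
  have hc : ∀ i, c i ∈ P := fun i => equivFinsuppOfBasisRight_apply 𝒞 x i ▸ hx _
  refine ⟨∑ i ∈ c.support, ⟨c i, hc i⟩ ⊗ₜ 𝒞 i, ?_⟩
  calc _ = (equivFinsuppOfBasisRight 𝒞).symm c := by simp [Finsupp.sum]
    _ = x := LinearEquiv.symm_apply_apply _ x

theorem LinearMap.rTensor_algebraLinearMap_comp {R A M N : Type*} [CommSemiring R] [Semiring A]
    [Algebra R A] [AddCommMonoid M] [Module R M] [AddCommMonoid N] [Module R N]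
    (φ : M →ₗ[R] R) (t : M ⊗[R] N) :
    (Algebra.linearMap R A ∘ₗ φ).rTensor N t = (1 : A) ⊗ₜ TensorProduct.lid R N (φ.rTensor N t) := by
  induction t using TensorProduct.induction_on <;>
    simp_all [tmul_add, Algebra.algebraMap_eq_smul_one, smul_tmul]

theorem LinearMap.lTensor_algebraLinearMap_comp {R A M N : Type*} [CommSemiring R] [Semiring A]
    [Algebra R A] [AddCommMonoid M] [Module R M] [AddCommMonoid N] [Module R N]
    (φ : N →ₗ[R] R) (t : M ⊗[R] N) :
    (Algebra.linearMap R A ∘ₗ φ).lTensor M t = TensorProduct.rid R M (φ.lTensor M t) ⊗ₜ (1 : A) := by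
  induction t using TensorProduct.induction_on <;>
    simp_all [add_tmul, Algebra.algebraMap_eq_smul_one, smul_tmul]

namespace QuasiTriangular

variable {k H}
variable (Q : QuasiTriangular k H)

-- `leg₁₂ t = t ⊗ 1`, `leg₁₃ t = t¹ ⊗ 1 ⊗ t²` and `leg₂₃ t = 1 ⊗ t` are the usual `t₁₂, t₁₃, t₂₃`.
local notation "leg₁₂" => Algebra.TensorProduct.map (AlgHom.id k H) Algebra.TensorProduct.includeLeft
local notation "leg₁₃" => Algebra.TensorProduct.map (AlgHom.id k H) Algebra.TensorProduct.includeRight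
local notation "leg₂₃" => (Algebra.TensorProduct.includeRight : H ⊗[k] H →ₐ[k] H ⊗[k] (H ⊗[k] H))

@[simps]
noncomputable def thetaₗ : Module.Dual k H →ₗ[k] H where
  toFun := qtTheta k H Q
  map_add' f g := by simp [qtTheta, map_add_left]
  map_smul' c f := by simp [qtTheta, map_smul_left]

@[simps]
noncomputable def thetaLₗ : Module.Dual k H →ₗ[k] H where
  toFun := qtThetaL k H Q
  map_add' f g := by simp [qtThetaL, map_add_right]
  map_smul' c f := by simp [qtThetaL, map_smul_right]

theorem Rr_eq_range : Rr k H Q = LinearMap.range Q.thetaₗ := by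
  rw [Rr, ← Submodule.span_eq (LinearMap.range Q.thetaₗ), LinearMap.coe_range]
  congr 1
  ext
  simp [eq_comm]

theorem Rl_eq_range : Rl k H Q = LinearMap.range Q.thetaLₗ := by
  rw [Rl, ← Submodule.span_eq (LinearMap.range Q.thetaLₗ), LinearMap.coe_range]
  congr 1
  ext
  simp [eq_comm]

theorem qtThetaL_mem_Rl (h : Module.Dual k H) : qtThetaL k H Q h ∈ Rl k H Q :=
  Submodule.subset_span ⟨h, rfl⟩

theorem apply_qtThetaL (ξ p : Module.Dual k H) : ξ (qtThetaL k H Q p) = p (qtTheta k H Q ξ) := by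
  simp only [qtThetaL, qtTheta]
  induction Q.R using TensorProduct.induction_on <;> simp_all [mul_comm]

theorem qtThetaL_eq_of_forall_apply_qtTheta [Module.Projective k H] {p : Module.Dual k H} {a : H}
    (h : ∀ ξ, p (qtTheta k H Q ξ) = ξ a) : qtThetaL k H Q p = a :=
  Module.eval_apply_injective k <| LinearMap.ext fun ξ => by simp [apply_qtThetaL, h]

theorem contract₂₃_leg₁₃_mul_leg₁₂ (β α : Module.Dual k H) (s t : H ⊗[k] H) :
    TensorProduct.rid k H ((TensorProduct.lid k k ∘ₗ map β α).lTensor H (leg₁₃ s * leg₁₂ t)) =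
      TensorProduct.rid k H (α.lTensor H s) * TensorProduct.rid k H (β.lTensor H t) := by
  induction s using TensorProduct.induction_on with
  | zero => simp
  | add s₁ s₂ h₁ h₂ => simp_all [add_mul]
  | tmul x y =>
    induction t using TensorProduct.induction_on <;>
      simp_all [mul_add, Algebra.TensorProduct.tmul_mul_tmul, smul_smul]

theorem contract₁₂_leg₁₃_mul_leg₂₃ (f g : Module.Dual k H) (s t : H ⊗[k] H) :
    TensorProduct.lid k H ((TensorProduct.lid k k ∘ₗ map f g).rTensor H
        ((TensorProduct.assoc k H H H).symm (leg₁₃ s * leg₂₃ t))) =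
      TensorProduct.lid k H (f.rTensor H s) * TensorProduct.lid k H (g.rTensor H t) := by
  induction s using TensorProduct.induction_on with
  | zero => simp
  | add s₁ s₂ h₁ h₂ => simp_all [add_mul]
  | tmul x y =>
    induction t using TensorProduct.induction_on <;>
      simp_all [mul_add, tmul_add, Algebra.TensorProduct.tmul_mul_tmul, smul_smul, mul_comm]

theorem qtThetaL_mul_qtThetaL (α β : Module.Dual k H) :
    qtThetaL k H Q α * qtThetaL k H Q β = qtThetaL k H Q (qtConv k H β α) := by
  show TensorProduct.rid k H (α.lTensor H Q.R) * TensorProduct.rid k H (β.lTensor H Q.R) =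
    TensorProduct.rid k H ((qtConv k H β α).lTensor H Q.R)
  rw [← contract₂₃_leg₁₃_mul_leg₁₂, ← Q.comul_snd, qtConv]
  simp only [LinearMap.lTensor_comp_apply]
  rfl

theorem qtTheta_mul_qtTheta (f g : Module.Dual k H) :
    qtTheta k H Q f * qtTheta k H Q g = qtTheta k H Q (qtConv k H f g) := by
  show TensorProduct.lid k H (f.rTensor H Q.R) * TensorProduct.lid k H (g.rTensor H Q.R) =
    TensorProduct.lid k H ((qtConv k H f g).rTensor H Q.R)
  rw [← contract₁₂_leg₁₃_mul_leg₂₃, ← Q.comul_fst, LinearEquiv.symm_apply_apply, qtConv]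
  simp only [LinearMap.rTensor_comp_apply]
  rfl

theorem contract₃_leg₁₃_mul_leg₂₃_R (h : Module.Dual k H) (s : H ⊗[k] H) :
    TensorProduct.rid k (H ⊗[k] H) (h.lTensor (H ⊗[k] H)
        ((TensorProduct.assoc k H H H).symm (leg₁₃ s * leg₂₃ Q.R))) =
      (Q.thetaLₗ ∘ₗ (LinearMap.mul k H).compr₂ h).lTensor H s := by
  induction s using TensorProduct.induction_on with
  | zero => simp
  | add s₁ s₂ h₁ h₂ => simp_all [add_mul]
  | tmul x y =>
    simp only [Algebra.TensorProduct.map_tmul, AlgHom.coe_id, id_eq,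
      Algebra.TensorProduct.includeRight_apply, LinearMap.lTensor_tmul, LinearMap.coe_comp,
      Function.comp_apply, thetaLₗ_apply, qtThetaL]
    induction Q.R using TensorProduct.induction_on <;>
      simp_all [mul_add, tmul_add, Algebra.TensorProduct.tmul_mul_tmul, tmul_smul]

theorem comul_qtThetaL (h : Module.Dual k H) :
    comul (qtThetaL k H Q h) = (Q.thetaLₗ ∘ₗ (LinearMap.mul k H).compr₂ h).lTensor H Q.R := by
  rw [← contract₃_leg₁₃_mul_leg₂₃_R, ← Q.comul_fst, LinearEquiv.symm_apply_apply, qtThetaL]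
  induction Q.R using TensorProduct.induction_on <;> simp_all

theorem comul_mem_range_map_subtype_Rl [Module.Free k H] {a : H} (ha : a ∈ Rl k H Q) :
    comul a ∈ LinearMap.range (map (Rl k H Q).subtype (Rl k H Q).subtype) := by
  obtain ⟨h, rfl⟩ := Q.Rl_eq_range ▸ ha
  obtain ⟨w, hw⟩ := mem_range_rTensor_subtype_of_forall_lTensor_mem (Rl k H Q) Q.R
    fun φ => Submodule.subset_span ⟨φ, rfl⟩
  let M : H →ₗ[k] Rl k H Q := (Q.thetaLₗ ∘ₗ (LinearMap.mul k H).compr₂ h).codRestrict _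
    fun e => Submodule.subset_span ⟨_, rfl⟩
  refine ⟨M.lTensor _ w, ?_⟩
  rw [thetaLₗ_apply, comul_qtThetaL, ← hw, ← LinearMap.comp_apply, ← LinearMap.comp_apply,
    LinearMap.lTensor_comp_rTensor, LinearMap.map_comp_lTensor]
  rfl

theorem mul₁₂_rTensor_leg₁₃_mul_leg₂₃ (T : H →ₗ[k] H) (s t : H ⊗[k] H) :
    (LinearMap.mul' k H ∘ₗ T.rTensor H).rTensor H
        ((TensorProduct.assoc k H H H).symm (leg₁₃ s * leg₂₃ t)) = T.rTensor H s * t := by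
  induction s using TensorProduct.induction_on with
  | zero => simp
  | add s₁ s₂ h₁ h₂ => simp_all [add_mul]
  | tmul x y =>
    induction t using TensorProduct.induction_on <;>
      simp_all [mul_add, tmul_add, Algebra.TensorProduct.tmul_mul_tmul]

theorem mul₁₂_lTensor_leg₁₃_mul_leg₂₃ (T : H →ₗ[k] H) (s t : H ⊗[k] H) :
    (LinearMap.mul' k H ∘ₗ T.lTensor H).rTensor H
        ((TensorProduct.assoc k H H H).symm (leg₁₃ s * leg₂₃ t)) = s * T.rTensor H t := by
  induction s using TensorProduct.induction_on with
  | zero => simp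
  | add s₁ s₂ h₁ h₂ => simp_all [add_mul]
  | tmul x y =>
    induction t using TensorProduct.induction_on <;>
      simp_all [mul_add, tmul_add, Algebra.TensorProduct.tmul_mul_tmul]

theorem mul₂₃_lTensor_leg₁₂_mul_leg₁₃ (T : H →ₗ[k] H) (s t : H ⊗[k] H) :
    (LinearMap.mul' k H ∘ₗ T.lTensor H).lTensor H (leg₁₂ s * leg₁₃ t) = s * T.lTensor H t := by
  induction s using TensorProduct.induction_on with
  | zero => simp
  | add s₁ s₂ h₁ h₂ => simp_all [add_mul]
  | tmul x y =>
    induction t using TensorProduct.induction_on <;>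
      simp_all [mul_add, Algebra.TensorProduct.tmul_mul_tmul]

theorem rTensor_antipode_R_mul_R : (antipode k).rTensor H Q.R * Q.R = 1 := by
  rw [← mul₁₂_rTensor_leg₁₃_mul_leg₂₃, ← Q.comul_fst, LinearEquiv.symm_apply_apply,
    ← LinearMap.rTensor_def, ← LinearMap.rTensor_comp_apply, LinearMap.comp_assoc,
    mul_antipode_rTensor_comul, LinearMap.rTensor_algebraLinearMap_comp]
  exact congrArg (1 ⊗ₜ ·) Q.counit_fst

theorem R_mul_rTensor_antipode_R : Q.R * (antipode k).rTensor H Q.R = 1 := by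
  rw [← mul₁₂_lTensor_leg₁₃_mul_leg₂₃, ← Q.comul_fst, LinearEquiv.symm_apply_apply,
    ← LinearMap.rTensor_def, ← LinearMap.rTensor_comp_apply, LinearMap.comp_assoc,
    mul_antipode_lTensor_comul, LinearMap.rTensor_algebraLinearMap_comp]
  exact congrArg (1 ⊗ₜ ·) Q.counit_fst

theorem lTensor_antipode_rTensor_antipode_R :
    (antipode k).lTensor H ((antipode k).rTensor H Q.R) = Q.R := by
  set V := (antipode k).rTensor H Q.R
  let Δ₂₃ := Algebra.TensorProduct.map (AlgHom.id k H) (Bialgebra.comulAlgHom k H)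
  have hΔR : Δ₂₃ Q.R = leg₁₃ Q.R * leg₁₂ Q.R := Q.comul_snd
  -- `Δ₂₃` is multiplicative, so it sends `V = R⁻¹` to `(R₁₃R₁₂)⁻¹ = V₁₂V₁₃`.
  have hΔV : Δ₂₃ V = leg₁₂ V * leg₁₃ V := by
    refine left_inv_eq_right_inv (a := Δ₂₃ Q.R) ?_ ?_
    · rw [← map_mul, Q.rTensor_antipode_R_mul_R, map_one]
    · rw [hΔR, mul_assoc, ← mul_assoc (leg₁₂ Q.R), ← map_mul, Q.R_mul_rTensor_antipode_R, map_one,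
        one_mul, ← map_mul, Q.R_mul_rTensor_antipode_R, map_one]
  have hcounitV : TensorProduct.rid k H ((counit (R := k)).lTensor H V) = 1 := by
    have h (t : H ⊗[k] H) : TensorProduct.rid k H ((counit (R := k)).lTensor H
        ((antipode k).rTensor H t)) = antipode k (TensorProduct.rid k H (counit.lTensor H t)) := by
      induction t using TensorProduct.induction_on <;> simp_all
    rw [h, ← antipode_one (R := k)]
    exact congrArg _ Q.counit_snd
  have hVinv : V * (antipode k).lTensor H V = 1 := by
    rw [← mul₂₃_lTensor_leg₁₂_mul_leg₁₃, ← hΔV, show Δ₂₃ V = comul.lTensor H V from rfl,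
      ← LinearMap.lTensor_comp_apply, LinearMap.comp_assoc, mul_antipode_lTensor_comul,
      LinearMap.lTensor_algebraLinearMap_comp, hcounitV]
    rfl
  exact (left_inv_eq_right_inv Q.R_mul_rTensor_antipode_R hVinv).symm

theorem map_antipode_antipode_R : map (antipode k) (antipode k) Q.R = Q.R := by
  rw [← LinearMap.lTensor_comp_rTensor, LinearMap.comp_apply, lTensor_antipode_rTensor_antipode_R]

theorem antipode_qtTheta (f : Module.Dual k H) :
    antipode k (qtTheta k H Q f) = qtTheta k H Q (f ∘ₗ Q.Sinv) := by
  conv_rhs => rw [qtTheta, ← Q.map_antipode_antipode_R]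
  rw [qtTheta]
  induction Q.R using TensorProduct.induction_on <;> simp_all [Q.Sinv_antipode]

theorem Sinv_qtThetaL (h : Module.Dual k H) :
    Q.Sinv (qtThetaL k H Q h) = qtThetaL k H Q (h ∘ₗ antipode k) := by
  conv_lhs => rw [qtThetaL, ← Q.map_antipode_antipode_R]
  rw [qtThetaL]
  induction Q.R using TensorProduct.induction_on <;> simp_all [Q.Sinv_antipode]

theorem Sinv_mem_Rl {a : H} (ha : a ∈ Rl k H Q) : Q.Sinv a ∈ Rl k H Q := by
  obtain ⟨h, rfl⟩ := Q.Rl_eq_range ▸ ha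
  rw [thetaLₗ_apply, Sinv_qtThetaL]
  exact Q.qtThetaL_mem_Rl _

end QuasiTriangular

/- The pairing `⟨·,·⟩` is a bilinear map `pairL` on `H × H`, pinned down on `R_l × R_r` by
`⟨a, θ f⟩ = f a`: this is how the inverse `ψ` of `p ↦ p(R¹)R²` defines it. -/
theorem radford_pairing_properties
    (k H : Type*) [Field k] [Ring H] [HopfAlgebra k H] (Q : QuasiTriangular k H)
    (pairL : H →ₗ[k] H →ₗ[k] k)
    (hchar : ∀ (f : Module.Dual k H) (a : H), a ∈ Rl k H Q →
      pairL a (qtTheta k H Q f) = f a) :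
    ∀ a ∈ Rl k H Q, ∀ a' ∈ Rl k H Q, ∀ b ∈ Rr k H Q, ∀ b' ∈ Rr k H Q,
      -- ⟨a a', b⟩ = ⟨a, b₂⟩ ⟨a', b₁⟩
      (pairL (a * a') b
        = (TensorProduct.lid k k)
            ((TensorProduct.map (pairL a') (pairL a)) (Coalgebra.comul (R := k) b))) ∧
      -- ⟨a, b b'⟩ = ⟨a₁, b⟩ ⟨a₂, b'⟩
      (pairL a (b * b')
        = (TensorProduct.lid k k)
            ((TensorProduct.map (pairL.flip b) (pairL.flip b')) (Coalgebra.comul (R := k) a))) ∧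
      -- ⟨a, S(b)⟩ = ⟨S⁻¹(a), b⟩
      (pairL a (HopfAlgebra.antipode (R := k) b) = pairL (Q.Sinv a) b) := by
  intro a ha a' ha' b hb b' hb'
  obtain ⟨f, rfl⟩ := Q.Rr_eq_range ▸ hb
  obtain ⟨g, rfl⟩ := Q.Rr_eq_range ▸ hb'
  have hθ : ∀ a ∈ Rl k H Q, qtThetaL k H Q (pairL a) = a :=
    fun a ha => Q.qtThetaL_eq_of_forall_apply_qtTheta fun ξ => hchar ξ a ha
  refine ⟨?_, ?_, ?_⟩
  · have hmul : a * a' = qtThetaL k H Q (qtConv k H (pairL a') (pairL a)) := by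
      rw [← Q.qtThetaL_mul_qtThetaL, hθ a ha, hθ a' ha']
    rw [hmul, QuasiTriangular.thetaₗ_apply, hchar f _ (Q.qtThetaL_mem_Rl _),
      QuasiTriangular.apply_qtThetaL]
    rfl
  · obtain ⟨w, hw⟩ := Q.comul_mem_range_map_subtype_Rl ha
    have hpair (f : Module.Dual k H) :
        pairL.flip (qtTheta k H Q f) ∘ₗ (Rl k H Q).subtype = f ∘ₗ (Rl k H Q).subtype :=
      LinearMap.ext fun x => hchar f x x.2
    simp only [QuasiTriangular.thetaₗ_apply, QuasiTriangular.qtTheta_mul_qtTheta, hchar _ a ha,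
      qtConv, LinearMap.comp_apply, ← hw, ← LinearMap.comp_apply (map _ _), ← TensorProduct.map_comp,
      hpair, LinearEquiv.coe_coe]
  · rw [QuasiTriangular.thetaₗ_apply, QuasiTriangular.antipode_qtTheta, hchar _ a ha,
      hchar f _ (Q.Sinv_mem_Rl ha)]
    rfl
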